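/- arXiv:1005.0327 — 3 statements merged into one kernel-verified Lean document; each statement's English description precedes it below -/
import Mathlib

section
/- For every complex number z, |e^z - 1| ≤ (e^{|z|} - 1) · exp(-(|z| - Re z)/2). -/
/-!
Write `exp z - 1 = 2 exp (z/2) sinh (z/2)`. The power series of `sinh` has nonnegative
coefficients, so `‖sinh w‖ ≤ sinh ‖w‖`, and `2 exp (Re z / 2) sinh (‖z‖ / 2)` is exactly
the right-hand side.
-/

theorem Complex.norm_sinh_le_sinh_norm (z : ℂ) : ‖sinh z‖ ≤ Real.sinh ‖z‖ :=
  (hasSum_sinh z).norm_le_of_bounded (Real.hasSum_sinh ‖z‖) fun n ↦ by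
    rw [norm_div, norm_pow, Complex.norm_natCast]

theorem Complex.exp_sub_one_eq_two_mul_exp_half_mul_sinh_half (z : ℂ) :
    exp z - 1 = 2 * exp (z / 2) * sinh (z / 2) := by
  rw [sinh, exp_neg, ← add_halves z, exp_add, add_halves]
  field_simp

theorem abs_exp_sub_one_le (z : ℂ) :
    ‖Complex.exp z - 1‖ ≤
      (Real.exp ‖z‖ - 1) * Real.exp (-(‖z‖ - z.re) / 2) := by
  have hhalf : ‖z / 2‖ = ‖z‖ / 2 := by simp
  calc ‖Complex.exp z - 1‖
      = 2 * Real.exp (z.re / 2) * ‖Complex.sinh (z / 2)‖ := by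
        simp [Complex.exp_sub_one_eq_two_mul_exp_half_mul_sinh_half, Complex.norm_exp]
    _ ≤ 2 * Real.exp (z.re / 2) * Real.sinh (‖z‖ / 2) := by
        gcongr
        exact hhalf ▸ Complex.norm_sinh_le_sinh_norm (z / 2)
    _ = (Real.exp ‖z‖ - 1) * Real.exp (-(‖z‖ - z.re) / 2) := by
        rw [Real.sinh_eq, Real.exp_neg, ← add_halves ‖z‖, Real.exp_add,
          show -(‖z‖ / 2 + ‖z‖ / 2 - z.re) / 2 = z.re / 2 + -(‖z‖ / 2) by ring,
          Real.exp_add, Real.exp_neg, add_halves]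
        field_simp
end

section
/- For all natural numbers n₁ ≤ n and m, the number C of digraphs on [n] with m arcs such that every vertex has in-degree ≥ 1, every vertex in [n₁] has out-degree ≥ 1, and every vertex outside [n₁] has out-degree 0, satisfies C ≤ m! · (e^x − 1)^n / x^m · (e^{x₁} − 1)^{n₁} / x₁^m for all real x > 0 and x₁ > 0. -/
open Finset Function

private lemma perm_apply_val_eq {n : ℕ} {d : Fin n → ℕ} (σ : ∀ i, Equiv.Perm (Fin (d i)))
    {i i' : Fin n} (e : i = i') {a : Fin (d i)} {a' : Fin (d i')}
    (hv : ((σ i a : Fin (d i)) : ℕ) = ((σ i' a' : Fin (d i')) : ℕ)) : (a : ℕ) = (a' : ℕ) := by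
  subst e
  exact congrArg Fin.val ((σ i).injective (Fin.val_injective hv))

private lemma rank_val_eq {m : ℕ} (s s' : Finset (Fin m)) {c c' : ℕ} (hs : s.card = c)
    (hs' : s'.card = c') (es : s = s') (k : Fin m) (hk : k ∈ s) (hk' : k ∈ s') :
    (((s.orderIsoOfFin hs).symm ⟨k, hk⟩ : Fin c) : ℕ)
      = (((s'.orderIsoOfFin hs').symm ⟨k, hk'⟩ : Fin c') : ℕ) := by
  subst es; subst hs; subst hs'; rfl

private lemma orderIso_coe_eq {m : ℕ} (s s' : Finset (Fin m)) {c c' : ℕ} (hs : s.card = c)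
    (hs' : s'.card = c') (es : s = s') (a : Fin c) (a' : Fin c') (ha : (a : ℕ) = (a' : ℕ)) :
    (↑(s.orderIsoOfFin hs a) : Fin m) = ↑(s'.orderIsoOfFin hs' a') := by
  subst es; subst hs; subst hs'
  cases Fin.val_injective ha
  rfl

private lemma perm_val_eq {n : ℕ} {d : Fin n → ℕ} (σ σ' : ∀ i, Equiv.Perm (Fin (d i)))
    {i i' : Fin n} (e : i = i') (j : Fin (d i)) (j' : Fin (d i')) (hj : (j : ℕ) = (j' : ℕ))
    (hv : ((σ i j : Fin (d i)) : ℕ) = ((σ' i j : Fin (d i)) : ℕ)) :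
    ((σ i' j' : Fin (d i')) : ℕ) = ((σ' i' j' : Fin (d i')) : ℕ) := by
  subst e
  cases Fin.val_injective hj
  exact hv

private lemma card_fiber_mul_factorial_le {m n : ℕ} (d : Fin n → ℕ) (hsum : ∑ i, d i = m) :
    Nat.card {h : Fin m → Fin n // ∀ i, (univ.filter fun k => h k = i).card = d i}
      * ∏ i, (d i).factorial ≤ m.factorial := by
  classical
  have hcardE : Fintype.card (Σ i : Fin n, Fin (d i)) = m := by
    simp [hsum]
  let E : (Σ i : Fin n, Fin (d i)) ≃ Fin m := Fintype.equivFinOfCardEq hcardE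
  have hmem : ∀ (h : Fin m → Fin n) (k : Fin m), k ∈ univ.filter fun k' => h k' = h k := by
    intro h k; simp
  have main : Nat.card
      ({h : Fin m → Fin n // ∀ i, (univ.filter fun k => h k = i).card = d i}
        × ∀ i, Equiv.Perm (Fin (d i))) ≤ Nat.card (Fin m ↪ Fin m) := by
    refine Nat.card_le_card_of_injective (fun z =>
      ⟨fun k => E ⟨z.1.1 k, z.2 (z.1.1 k)
          (((univ.filter fun k' => z.1.1 k' = z.1.1 k).orderIsoOfFin (z.1.2 (z.1.1 k))).symm
            ⟨k, hmem z.1.1 k⟩)⟩, ?_⟩) ?_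
    · -- injectivity of the embedding's underlying function
      intro k k' hE
      obtain ⟨⟨h, hh⟩, σ⟩ := z
      have hs := E.injective hE
      have e1 : h k = h k' := congrArg Sigma.fst hs
      have e2 := congrArg (fun p : Σ i, Fin (d i) => (p.2 : ℕ)) hs
      have e3 := perm_apply_val_eq σ e1 e2
      have e4 := orderIso_coe_eq (univ.filter fun k'' => h k'' = h k)
        (univ.filter fun k'' => h k'' = h k') (hh (h k)) (hh (h k')) (by rw [e1]) _ _ e3
      simpa using e4
    · -- injectivity of the full map
      rintro ⟨⟨h, hh⟩, σ⟩ ⟨⟨h', hh'⟩, σ'⟩ hzz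
      have hfun : ∀ k, (⟨h k, σ (h k)
          (((univ.filter fun k' => h k' = h k).orderIsoOfFin (hh (h k))).symm
            ⟨k, hmem h k⟩)⟩ : Σ i, Fin (d i)) = ⟨h' k, σ' (h' k)
          (((univ.filter fun k' => h' k' = h' k).orderIsoOfFin (hh' (h' k))).symm
            ⟨k, hmem h' k⟩)⟩ := by
        intro k
        exact E.injective (congrFun (congrArg (fun f : Fin m ↪ Fin m => (f : Fin m → Fin m)) hzz) k)
      have eh : h = h' := funext fun k => congrArg Sigma.fst (hfun k)
      subst eh
      refine Prod.ext (Subtype.ext rfl) ?_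
      funext i
      refine Equiv.ext fun j => Fin.val_injective ?_
      have hmemi : ∀ j' : Fin (d i),
          (↑((univ.filter fun k' => h k' = i).orderIsoOfFin (hh i) j') : Fin m)
            ∈ univ.filter fun k' => h k' = i :=
        fun j' => ((univ.filter fun k' => h k' = i).orderIsoOfFin (hh i) j').2
      obtain ⟨k, hkdef⟩ : ∃ k : Fin m,
          k = ↑((univ.filter fun k' => h k' = i).orderIsoOfFin (hh i) j) := ⟨_, rfl⟩
      have hki : h k = i := by
        rw [hkdef]
        exact (mem_filter.mp (hmemi j)).2
      have hv := congrArg (fun p : Σ i, Fin (d i) => (p.2 : ℕ)) (hfun k)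
      -- relate ranks: the rank of k at index h k equals j (at index i)
      have hj : ((((univ.filter fun k' => h k' = h k).orderIsoOfFin (hh (h k))).symm
          ⟨k, hmem h k⟩ : Fin (d (h k))) : ℕ) = (j : ℕ) := by
        have hkmem : k ∈ univ.filter fun k' => h k' = i := by rw [hkdef]; exact hmemi j
        have h5 := rank_val_eq (univ.filter fun k' => h k' = h k)
          (univ.filter fun k' => h k' = i) (hh (h k)) (hh i)
          (by rw [hki]) k (hmem h k) hkmem
        rw [h5]
        have h6 : (⟨k, hkmem⟩ : {x // x ∈ univ.filter fun k' => h k' = i})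
            = (univ.filter fun k' => h k' = i).orderIsoOfFin (hh i) j :=
          Subtype.ext hkdef
        rw [h6]
        simp
      have hv' : ((σ (h k) (((univ.filter fun k' => h k' = h k).orderIsoOfFin (hh (h k))).symm
            ⟨k, hmem h k⟩) : Fin (d (h k))) : ℕ)
          = ((σ' (h k) (((univ.filter fun k' => h k' = h k).orderIsoOfFin (hh (h k))).symm
            ⟨k, hmem h k⟩) : Fin (d (h k))) : ℕ) := hv
      exact perm_val_eq σ σ' hki _ j hj hv'
  have lhs : Nat.card
      ({h : Fin m → Fin n // ∀ i, (univ.filter fun k => h k = i).card = d i}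
        × ∀ i, Equiv.Perm (Fin (d i)))
      = Nat.card {h : Fin m → Fin n // ∀ i, (univ.filter fun k => h k = i).card = d i}
        * ∏ i, (d i).factorial := by
    rw [Nat.card_prod]
    congr 1
    rw [Nat.card_pi]
    exact Finset.prod_congr rfl fun i _ => by
      simp [Nat.card_eq_fintype_card, Fintype.card_perm]
  have rhs : Nat.card (Fin m ↪ Fin m) = m.factorial := by
    simp [Nat.card_eq_fintype_card, Fintype.card_embedding_eq, Nat.descFactorial_self]
  rw [lhs, rhs] at main
  exact main


private lemma surj_card_le (m n : ℕ) {x : ℝ} (hx : 0 < x) :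
    (Nat.card {h : Fin m → Fin n // Function.Surjective h} : ℝ) * x ^ m
      ≤ (m.factorial : ℝ) * (Real.exp x - 1) ^ n := by
  classical
  have hex : (0:ℝ) ≤ Real.exp x - 1 := by
    have := Real.add_one_le_exp x; linarith
  have hsum_le : ∑ k ∈ Finset.Icc 1 m, x ^ k / (k.factorial : ℝ) ≤ Real.exp x - 1 := by
    have h1 : ∑ k ∈ Finset.range (m+1), x ^ k / (k.factorial : ℝ) ≤ Real.exp x :=
      Real.sum_le_exp_of_nonneg hx.le _
    have h2 : insert 0 (Finset.Icc 1 m) = Finset.range (m+1) := by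
      ext k; simp [Nat.lt_succ_iff]; omega
    rw [← h2, Finset.sum_insert (by simp)] at h1
    simp only [pow_zero, Nat.factorial_zero, Nat.cast_one, div_one] at h1
    linarith
  set w : (Fin m → Fin n) → Fin n → ℕ := fun h i => (univ.filter fun k => h k = i).card with hw
  set F : Finset (Fin m → Fin n) := univ.filter Function.Surjective with hF
  have hNat : Nat.card {h : Fin m → Fin n // Function.Surjective h} = F.card := by
    simp [hF, Nat.card_eq_fintype_card, Fintype.card_subtype]
  set D : Finset (Fin n → ℕ) := Fintype.piFinset fun _ => Finset.Icc 1 m with hD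
  have hwD : ∀ h ∈ F, w h ∈ D := by
    intro h hh
    rw [hD, Fintype.mem_piFinset]
    intro i
    rw [Finset.mem_Icc]
    constructor
    · obtain ⟨k, hk⟩ := (mem_filter.mp hh).2 i
      exact Finset.card_pos.mpr ⟨k, mem_filter.mpr ⟨mem_univ _, hk⟩⟩
    · calc w h i ≤ (univ : Finset (Fin m)).card := card_filter_le _ _
        _ = m := by simp
  have hsplit : F.card = ∑ d ∈ D, (F.filter fun h => w h = d).card :=
    card_eq_sum_card_fiberwise hwD
  have hterm : ∀ d ∈ D, ((F.filter fun h => w h = d).card : ℝ) * x ^ m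
      ≤ (m.factorial : ℝ) * ∏ i, x ^ (d i) / (d i).factorial := by
    intro d _
    rcases (F.filter fun h => w h = d).eq_empty_or_nonempty with he | ⟨h₀, hh₀⟩
    · rw [he]
      simp only [card_empty, Nat.cast_zero, zero_mul]
      positivity
    · have hwh₀ : w h₀ = d := (mem_filter.mp hh₀).2
      have hsum : ∑ i, d i = m := by
        rw [← hwh₀]
        have := card_eq_sum_card_fiberwise (f := h₀) (s := (univ : Finset (Fin m)))
          (t := (univ : Finset (Fin n))) (fun a _ => mem_univ _)
        simpa [hw] using this.symm
      have hcard : (F.filter fun h => w h = d).card * ∏ i, (d i).factorial ≤ m.factorial := by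
        refine le_trans (mul_le_mul_left ?_ _) (card_fiber_mul_factorial_le d hsum)
        have h3 : (F.filter fun h => w h = d).card
            ≤ (univ.filter fun h : Fin m → Fin n =>
                ∀ i, (univ.filter fun k => h k = i).card = d i).card := by
          apply card_le_card
          intro h hh
          rw [mem_filter] at hh ⊢
          exact ⟨mem_univ _, fun i => congrFun hh.2 i⟩
        refine h3.trans_eq ?_
        rw [Nat.card_eq_fintype_card, Fintype.card_subtype]
      have hprodpos : (0:ℝ) < ∏ i, ((d i).factorial : ℝ) := by positivity
      have hxm : x ^ m = ∏ i, x ^ (d i) := by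
        rw [← hsum, ← Finset.prod_pow_eq_pow_sum]
      have hcardR : ((F.filter fun h => w h = d).card : ℝ)
          ≤ (m.factorial : ℝ) / ∏ i, ((d i).factorial : ℝ) := by
        rw [le_div_iff₀ hprodpos]
        exact_mod_cast hcard
      calc ((F.filter fun h => w h = d).card : ℝ) * x ^ m
          ≤ ((m.factorial : ℝ) / ∏ i, ((d i).factorial : ℝ)) * x ^ m := by
            exact mul_le_mul_of_nonneg_right hcardR (by positivity)
        _ = (m.factorial : ℝ) * ∏ i, x ^ (d i) / (d i).factorial := by
            rw [hxm, div_mul_eq_mul_div, mul_div_assoc, ← Finset.prod_div_distrib]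
  calc (Nat.card {h : Fin m → Fin n // Function.Surjective h} : ℝ) * x ^ m
      = ∑ d ∈ D, ((F.filter fun h => w h = d).card : ℝ) * x ^ m := by
        rw [hNat, hsplit]; push_cast; rw [Finset.sum_mul]
    _ ≤ ∑ d ∈ D, (m.factorial : ℝ) * ∏ i, x ^ (d i) / (d i).factorial :=
        Finset.sum_le_sum hterm
    _ = (m.factorial : ℝ) * ∑ d ∈ D, ∏ i, x ^ (d i) / (d i).factorial := by
        rw [Finset.mul_sum]
    _ = (m.factorial : ℝ) * ∏ i : Fin n, ∑ k ∈ Finset.Icc 1 m, x ^ k / (k.factorial : ℝ) := by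
        rw [hD, Finset.prod_univ_sum]
    _ ≤ (m.factorial : ℝ) * (Real.exp x - 1) ^ n := by
        refine mul_le_mul_of_nonneg_left ?_ (by positivity)
        calc ∏ i : Fin n, ∑ k ∈ Finset.Icc 1 m, x ^ k / (k.factorial : ℝ)
            ≤ ∏ _i : Fin n, (Real.exp x - 1) :=
              Finset.prod_le_prod (fun _ _ => by positivity) (fun _ _ => hsum_le)
          _ = (Real.exp x - 1) ^ n := by rw [prod_const, card_univ, Fintype.card_fin]

private noncomputable def arcEquiv {n m : ℕ} (G : Finset (Fin n × Fin n)) (hc : G.card = m) :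
    Fin m ≃ {p // p ∈ G} :=
  (Fintype.equivFinOfCardEq (by rw [Fintype.card_coe, hc])).symm

private lemma arcEquiv_inj {n m : ℕ} {G G' : Finset (Fin n × Fin n)} (e : G = G')
    (hc : G.card = m) (hc' : G'.card = m) (j j' : Fin m)
    (h : (↑(arcEquiv G hc j) : Fin n × Fin n) = ↑(arcEquiv G' hc' j')) : j = j' := by
  subst e
  exact (arcEquiv G hc).injective (Subtype.coe_injective h)

private lemma nonempty_of_one_le_natCard {α : Type*} (h : 1 ≤ Nat.card α) : Nonempty α := by
  by_contra hne
  rw [not_nonempty_iff] at hne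
  rw [Nat.card_of_isEmpty] at h
  omega

private noncomputable def toPair {n n₁ m : ℕ} (h₁ : n₁ ≤ n)
    (z : {G : Finset (Fin n × Fin n) //
        (∀ p ∈ G, p.1 ≠ p.2) ∧ G.card = m ∧
        (∀ i : Fin n, 1 ≤ Nat.card {p : Fin n × Fin n // p ∈ G ∧ p.2 = i}) ∧
        (∀ i : Fin n, i.val < n₁ → 1 ≤ Nat.card {p : Fin n × Fin n // p ∈ G ∧ p.1 = i}) ∧
        (∀ i : Fin n, n₁ ≤ i.val → Nat.card {p : Fin n × Fin n // p ∈ G ∧ p.1 = i} = 0)}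
      × Equiv.Perm (Fin m)) :
    {h : Fin m → Fin n // Function.Surjective h}
      × {t : Fin m → Fin n₁ // Function.Surjective t} :=
  (⟨fun k => (↑(arcEquiv z.1.1 z.1.2.2.1 (z.2 k)) : Fin n × Fin n).2, by
      intro i
      obtain ⟨⟨p, hp, hpi⟩⟩ := nonempty_of_one_le_natCard (z.1.2.2.2.1 i)
      refine ⟨z.2.symm ((arcEquiv z.1.1 z.1.2.2.1).symm ⟨p, hp⟩), ?_⟩
      simp [hpi]⟩,
   ⟨fun k => ⟨(↑(arcEquiv z.1.1 z.1.2.2.1 (z.2 k)) : Fin n × Fin n).1.val, by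
      set p : Fin n × Fin n := ↑(arcEquiv z.1.1 z.1.2.2.1 (z.2 k)) with hpdef
      have hp : p ∈ z.1.1 := (arcEquiv z.1.1 z.1.2.2.1 (z.2 k)).2
      by_contra hlt
      push_neg at hlt
      have h0 := z.1.2.2.2.2.2 p.1 hlt
      haveI : Nonempty {q : Fin n × Fin n // q ∈ z.1.1 ∧ q.1 = p.1} := ⟨⟨p, hp, rfl⟩⟩
      have : 0 < Nat.card {q : Fin n × Fin n // q ∈ z.1.1 ∧ q.1 = p.1} := Nat.card_pos
      omega⟩, by
      intro i
      have hin : (⟨i.val, lt_of_lt_of_le i.2 h₁⟩ : Fin n).val < n₁ := i.2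
      obtain ⟨⟨p, hp, hpi⟩⟩ := nonempty_of_one_le_natCard (z.1.2.2.2.2.1 _ hin)
      refine ⟨z.2.symm ((arcEquiv z.1.1 z.1.2.2.1).symm ⟨p, hp⟩), ?_⟩
      apply Fin.val_injective
      simp [hpi]⟩)

private lemma toPair_injective {n n₁ m : ℕ} (h₁ : n₁ ≤ n) :
    Function.Injective (toPair (n := n) (n₁ := n₁) (m := m) h₁) := by
  rintro ⟨⟨G, hG⟩, π⟩ ⟨⟨G', hG'⟩, π'⟩ hzz
  have h1 := congrArg (fun q : {h : Fin m → Fin n // Function.Surjective h}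
      × {t : Fin m → Fin n₁ // Function.Surjective t} => (q.1 : Fin m → Fin n)) hzz
  have h2 := congrArg (fun q : {h : Fin m → Fin n // Function.Surjective h}
      × {t : Fin m → Fin n₁ // Function.Surjective t} => (q.2 : Fin m → Fin n₁)) hzz
  have harc : ∀ k, (↑(arcEquiv G hG.2.1 (π k)) : Fin n × Fin n)
      = ↑(arcEquiv G' hG'.2.1 (π' k)) := by
    intro k
    have e2 : (↑(arcEquiv G hG.2.1 (π k)) : Fin n × Fin n).2
        = (↑(arcEquiv G' hG'.2.1 (π' k)) : Fin n × Fin n).2 := congrFun h1 k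
    have e0 : ((toPair h₁ (⟨⟨G, hG⟩, π⟩ : _ × Equiv.Perm (Fin m))).2.1 k).val
        = ((toPair h₁ (⟨⟨G', hG'⟩, π'⟩ : _ × Equiv.Perm (Fin m))).2.1 k).val :=
      congrArg Fin.val (congrFun h2 k)
    have e1 : (↑(arcEquiv G hG.2.1 (π k)) : Fin n × Fin n).1.val
        = (↑(arcEquiv G' hG'.2.1 (π' k)) : Fin n × Fin n).1.val := e0
    exact Prod.ext (Fin.val_injective e1) e2
  have hGG : G = G' := by
    ext p
    constructor
    · intro hp
      have hp2 : p = ↑(arcEquiv G' hG'.2.1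
          (π' (π.symm ((arcEquiv G hG.2.1).symm ⟨p, hp⟩)))) := by
        rw [← harc]; simp
      rw [hp2]
      exact (arcEquiv G' hG'.2.1 _).2
    · intro hp
      have hp2 : p = ↑(arcEquiv G hG.2.1
          (π (π'.symm ((arcEquiv G' hG'.2.1).symm ⟨p, hp⟩)))) := by
        rw [harc]; simp
      rw [hp2]
      exact (arcEquiv G hG.2.1 _).2
  subst hGG
  have hπ : π = π' := by
    refine Equiv.ext fun k => ?_
    exact arcEquiv_inj rfl hG.2.1 hG'.2.1 (π k) (π' k) (harc k)
  subst hπ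
  exact Prod.ext (Subtype.ext rfl) rfl


/-- Bound on the number of simple digraphs on `[n]` with `m` arcs, all in-degrees
positive, out-degrees positive exactly on `[n₁]` and zero outside. -/
theorem digraph_constrained_count_le (n n₁ m : ℕ) (h₁ : n₁ ≤ n)
    (x x₁ : ℝ) (hx : 0 < x) (hx₁ : 0 < x₁) :
    (Nat.card {G : Finset (Fin n × Fin n) //
        (∀ p ∈ G, p.1 ≠ p.2) ∧ G.card = m ∧
        (∀ i : Fin n, 1 ≤ Nat.card {p : Fin n × Fin n // p ∈ G ∧ p.2 = i}) ∧
        (∀ i : Fin n, i.val < n₁ → 1 ≤ Nat.card {p : Fin n × Fin n // p ∈ G ∧ p.1 = i}) ∧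
        (∀ i : Fin n, n₁ ≤ i.val → Nat.card {p : Fin n × Fin n // p ∈ G ∧ p.1 = i} = 0)} : ℝ)
      ≤ (m.factorial : ℝ) * ((Real.exp x - 1) ^ n / x ^ m) *
          ((Real.exp x₁ - 1) ^ n₁ / x₁ ^ m) := by
  classical
  set C : ℕ := Nat.card {G : Finset (Fin n × Fin n) //
        (∀ p ∈ G, p.1 ≠ p.2) ∧ G.card = m ∧
        (∀ i : Fin n, 1 ≤ Nat.card {p : Fin n × Fin n // p ∈ G ∧ p.2 = i}) ∧
        (∀ i : Fin n, i.val < n₁ → 1 ≤ Nat.card {p : Fin n × Fin n // p ∈ G ∧ p.1 = i}) ∧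
        (∀ i : Fin n, n₁ ≤ i.val → Nat.card {p : Fin n × Fin n // p ∈ G ∧ p.1 = i} = 0)}
    with hC
  have key : C * m.factorial
      ≤ Nat.card {h : Fin m → Fin n // Function.Surjective h}
        * Nat.card {t : Fin m → Fin n₁ // Function.Surjective t} := by
    have hmain := Nat.card_le_card_of_injective _ (toPair_injective (m := m) h₁)
    rwa [Nat.card_prod, Nat.card_prod,
      show Nat.card (Equiv.Perm (Fin m)) = m.factorial by
        simp [Nat.card_eq_fintype_card, Fintype.card_perm]] at hmain
  have hH := surj_card_le m n hx
  have hT := surj_card_le m n₁ hx₁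
  have hm : (0:ℝ) < m.factorial := by positivity
  have keyR : (C : ℝ) * m.factorial
      ≤ (Nat.card {h : Fin m → Fin n // Function.Surjective h} : ℝ)
        * (Nat.card {t : Fin m → Fin n₁ // Function.Surjective t} : ℝ) := by
    exact_mod_cast key
  have h5 : (C : ℝ) * m.factorial * (x ^ m * x₁ ^ m)
      ≤ ((m.factorial : ℝ) * (Real.exp x - 1) ^ n)
        * ((m.factorial : ℝ) * (Real.exp x₁ - 1) ^ n₁) := by
    calc (C : ℝ) * m.factorial * (x ^ m * x₁ ^ m)
        ≤ ((Nat.card {h : Fin m → Fin n // Function.Surjective h} : ℝ)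
            * (Nat.card {t : Fin m → Fin n₁ // Function.Surjective t} : ℝ))
            * (x ^ m * x₁ ^ m) :=
          mul_le_mul_of_nonneg_right keyR (by positivity)
      _ = ((Nat.card {h : Fin m → Fin n // Function.Surjective h} : ℝ) * x ^ m)
            * ((Nat.card {t : Fin m → Fin n₁ // Function.Surjective t} : ℝ) * x₁ ^ m) := by
          ring
      _ ≤ ((m.factorial : ℝ) * (Real.exp x - 1) ^ n)
            * ((m.factorial : ℝ) * (Real.exp x₁ - 1) ^ n₁) := by
          have hex : (0:ℝ) ≤ Real.exp x - 1 := by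
            have := Real.add_one_le_exp x; linarith
          exact mul_le_mul hH hT (by positivity) (by positivity)
  rw [show (m.factorial : ℝ) * ((Real.exp x - 1) ^ n / x ^ m)
        * ((Real.exp x₁ - 1) ^ n₁ / x₁ ^ m)
      = ((m.factorial : ℝ) * (Real.exp x - 1) ^ n * (Real.exp x₁ - 1) ^ n₁)
        / (x ^ m * x₁ ^ m) from by ring]
  rw [le_div_iff₀ (by positivity)]
  refine le_of_mul_le_mul_left ?_ hm
  calc (m.factorial : ℝ) * ((C : ℝ) * (x ^ m * x₁ ^ m))
      = (C : ℝ) * m.factorial * (x ^ m * x₁ ^ m) := by ring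
    _ ≤ ((m.factorial : ℝ) * (Real.exp x - 1) ^ n)
        * ((m.factorial : ℝ) * (Real.exp x₁ - 1) ^ n₁) := h5
    _ = (m.factorial : ℝ)
        * ((m.factorial : ℝ) * (Real.exp x - 1) ^ n * (Real.exp x₁ - 1) ^ n₁) := by ring
end

section
/- The function g(x) = (e^x − 1)^2 / (e^x (e^x − 1 − x)) defined for x > 0 satisfies g(x) → 2 as x → 0+, g(x) → 1 as x → ∞, and 1 < g(x) ≤ 2 for all x > 0. -/
/-!
Clearing denominators, `1 < g x` is `1 - x < exp (-x)` and `g x ≤ 2` is `x ≤ sinh x`.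
Near `0`, L'Hôpital gives `exp x - 1 - x ~ x ^ 2 / 2` while `exp x - 1 ~ x`, so `g → 2`;
after dividing numerator and denominator by `exp (2 * x)`, `g → 1` at infinity
because `exp (-x)` and `x * exp (-x)` tend to `0`.
-/

open Real Filter Topology

noncomputable def expRatio (x : ℝ) : ℝ := (exp x - 1) ^ 2 / (exp x * (exp x - 1 - x))

theorem exp_mul_exp_sub_one_sub_lt_sq {x : ℝ} (hx : x ≠ 0) :
    exp x * (exp x - 1 - x) < (exp x - 1) ^ 2 := by
  have h := add_one_lt_exp (neg_ne_zero.2 hx)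
  have : exp x * exp (-x) = 1 := by rw [← exp_add, add_neg_cancel, exp_zero]
  nlinarith [exp_pos x]

theorem sq_exp_sub_one_le_two_mul {x : ℝ} (hx : 0 ≤ x) :
    (exp x - 1) ^ 2 ≤ 2 * (exp x * (exp x - 1 - x)) := by
  have h := self_le_sinh_iff.2 hx
  rw [sinh_eq] at h
  have : exp x * exp (-x) = 1 := by rw [← exp_add, add_neg_cancel, exp_zero]
  nlinarith [exp_pos x]

theorem one_lt_expRatio {x : ℝ} (hx : x ≠ 0) : 1 < expRatio x :=
  (one_lt_div (mul_pos (exp_pos x) (by linarith [add_one_lt_exp hx]))).2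
    (exp_mul_exp_sub_one_sub_lt_sq hx)

theorem expRatio_le_two {x : ℝ} (hx : 0 ≤ x) : expRatio x ≤ 2 :=
  div_le_of_le_mul₀ (mul_nonneg (exp_pos x).le (by linarith [add_one_le_exp x])) zero_le_two
    (sq_exp_sub_one_le_two_mul hx)

theorem tendsto_exp_sub_one_div_nhdsNE : Tendsto (fun x => (exp x - 1) / x) (𝓝[≠] 0) (𝓝 1) := by
  have h := (hasDerivAt_exp 0).tendsto_slope
  rw [exp_zero] at h
  refine h.congr fun x => ?_
  rw [slope_def_field, exp_zero, sub_zero]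

theorem tendsto_exp_sub_one_sub_div_sq_nhdsNE :
    Tendsto (fun x => (exp x - 1 - x) / x ^ 2) (𝓝[≠] 0) (𝓝 (1 / 2)) := by
  refine HasDerivAt.lhopital_zero_nhdsNE (f' := fun x => exp x - 1) (g' := fun x => 2 * x)
    (.of_forall fun x => ((hasDerivAt_exp x).sub_const 1).sub (hasDerivAt_id x))
    (.of_forall fun x => by simpa using hasDerivAt_pow 2 x) ?_ ?_ ?_ ?_
  · filter_upwards [self_mem_nhdsWithin] with x hx using mul_ne_zero two_ne_zero hx
  · exact ((by fun_prop : Continuous fun x => exp x - 1 - x).tendsto' 0 0 (by simp)).mono_left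
      nhdsWithin_le_nhds
  · exact ((continuous_pow 2).tendsto' 0 0 (by simp)).mono_left nhdsWithin_le_nhds
  · refine (tendsto_exp_sub_one_div_nhdsNE.div_const 2).congr fun x => ?_
    rw [div_div, mul_comm]

theorem tendsto_expRatio_nhdsNE : Tendsto expRatio (𝓝[≠] 0) (𝓝 2) := by
  have h := (tendsto_exp_sub_one_div_nhdsNE.pow 2).div
    ((continuous_exp.tendsto' 0 1 exp_zero).mono_left nhdsWithin_le_nhds |>.mul
      tendsto_exp_sub_one_sub_div_sq_nhdsNE) (by norm_num)
  rw [show (1 : ℝ) ^ 2 / (1 * (1 / 2)) = 2 by norm_num] at h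
  refine h.congr' ?_
  filter_upwards [self_mem_nhdsWithin] with x (hx : x ≠ 0)
  rw [Pi.div_apply, expRatio]
  field_simp

theorem expRatio_eq_exp_neg (x : ℝ) :
    expRatio x = (1 - exp (-x)) ^ 2 / (1 - exp (-x) - x * exp (-x)) := by
  rw [expRatio, exp_neg]
  field_simp

theorem tendsto_expRatio_atTop : Tendsto expRatio atTop (𝓝 1) := by
  have h := ((tendsto_exp_neg_atTop_nhds_zero.const_sub 1).pow 2).div
    ((tendsto_exp_neg_atTop_nhds_zero.const_sub 1).sub
      (by simpa using tendsto_pow_mul_exp_neg_atTop_nhds_zero 1)) (by norm_num)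
  rw [show ((1 : ℝ) - 0) ^ 2 / (1 - 0 - 0) = 1 by norm_num] at h
  exact h.congr fun x => (expRatio_eq_exp_neg x).symm

theorem g_properties :
    Filter.Tendsto (fun x : ℝ => (Real.exp x - 1) ^ 2 / (Real.exp x * (Real.exp x - 1 - x)))
      (nhdsWithin 0 (Set.Ioi 0)) (nhds 2) ∧
    Filter.Tendsto (fun x : ℝ => (Real.exp x - 1) ^ 2 / (Real.exp x * (Real.exp x - 1 - x)))
      Filter.atTop (nhds 1) ∧
    ∀ x : ℝ, 0 < x →
      1 < (Real.exp x - 1) ^ 2 / (Real.exp x * (Real.exp x - 1 - x)) ∧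
      (Real.exp x - 1) ^ 2 / (Real.exp x * (Real.exp x - 1 - x)) ≤ 2 :=
  ⟨tendsto_expRatio_nhdsNE.mono_left (nhdsWithin_mono 0 fun _ hx => ne_of_gt hx),
    tendsto_expRatio_atTop, fun _ hx => ⟨one_lt_expRatio hx.ne', expRatio_le_two hx.le⟩⟩
end
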